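/- Let d, M, n be positive integers and let x₁, …, x_n ∈ ℝ^d satisfy ‖x_t‖ ≤ 1 for all t. For each t ∈ {1,…,n} set A_t = (1/M) I_d + Σ_{τ=1}^{t−1} x_τ x_τ'. If c > 0 satisfies c < min{ 1, √(x_t' A_t^{-1} x_t) } for every t ∈ {1,…,n}, then c · n ≤ √( 2 d n log(2 M n) ). -/

import Mathlib

/-!
Write `w_t = x_t' A_t⁻¹ x_t`. Since `A_{t+1} = A_t + x_t x_t'`, the matrix determinant lemma
gives `det A_{t+1} = det A_t (1 + w_t)`, so `∏ (1 + w_t) = det A_n / det A_0`. Every Rayleigh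
quotient of `A_n` is at most `1/M + n` because `‖x_τ‖ ≤ 1`, hence `det A_n ≤ (1/M + n)^d`
and `∏ (1 + w_t) ≤ (1 + M n)^d`. With `min 1 w ≤ 2 log (1 + w)` this is the elliptical potential
bound `∑ min 1 w_t ≤ 2 d log (2 M n)`, and Cauchy–Schwarz gives
`c n < ∑ min 1 √w_t ≤ √(n ∑ min 1 w_t)`.
-/

open Matrix Finset

theorem Matrix.det_add_vecMulVec {ι α : Type*} [Fintype ι] [DecidableEq ι] [CommRing α]
    {A : Matrix ι ι α} (hA : IsUnit A.det) (u v : ι → α) :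
    (A + vecMulVec u v).det = A.det * (1 + v ⬝ᵥ (A⁻¹ *ᵥ u)) := by
  rw [vecMulVec_eq Unit, det_add_replicateCol_mul_replicateRow hA, Matrix.mul_assoc,
    ← replicateCol_mulVec, det_unique (1 + _ : Matrix Unit Unit α)]
  rfl

theorem Matrix.dotProduct_sq_le {ι : Type*} [Fintype ι] (u v : ι → ℝ) :
    (u ⬝ᵥ v) ^ 2 ≤ (u ⬝ᵥ u) * (v ⬝ᵥ v) := by
  simpa only [dotProduct, sq] using sum_mul_sq_le_sq_mul_sq univ u v

theorem Matrix.PosSemidef.det_le_pow {ι : Type*} [Fintype ι] [DecidableEq ι]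
    {A : Matrix ι ι ℝ} (hA : A.PosSemidef) {b : ℝ}
    (hb : ∀ v, v ⬝ᵥ (A *ᵥ v) ≤ b * (v ⬝ᵥ v)) :
    A.det ≤ b ^ Fintype.card ι := by
  have heig : ∀ i, hA.isHermitian.eigenvalues i ≤ b := fun i => by
    set v := hA.isHermitian.eigenvectorBasis i
    have hv : (v : ι → ℝ) ⬝ᵥ v = 1 := by
      have h := real_inner_self_eq_norm_sq v
      rwa [hA.isHermitian.eigenvectorBasis.orthonormal.1 i, one_pow] at h
    simpa [hA.isHermitian.eigenvalues_eq, hv] using hb v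
  rw [hA.isHermitian.det_eq_prod_eigenvalues, ← card_univ, ← prod_const]
  exact prod_le_prod (fun i _ => hA.eigenvalues_nonneg i) fun i _ => heig i

theorem Matrix.dotProduct_vecMulVec_self_mulVec {ι α : Type*} [Fintype ι] [CommRing α]
    (u v : ι → α) : v ⬝ᵥ (vecMulVec u u *ᵥ v) = (u ⬝ᵥ v) ^ 2 := by
  rw [vecMulVec_mulVec, op_smul_eq_smul, dotProduct_smul, smul_eq_mul, dotProduct_comm, sq]

theorem Real.min_one_le_two_mul_log_one_add {w : ℝ} (hw : 0 ≤ w) :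
    min 1 w ≤ 2 * Real.log (1 + w) := by
  rcases le_total w 1 with hw1 | hw1
  · have hlog := Real.one_sub_inv_le_log_of_pos (by linarith : (0 : ℝ) < 1 + w)
    have : (1 + w)⁻¹ ≤ 1 - w / 2 := by
      rw [inv_le_iff_one_le_mul₀ (by linarith)]
      nlinarith
    rw [min_eq_right hw1]
    linarith
  · have := Real.log_le_log (by norm_num) (by linarith : (2 : ℝ) ≤ 1 + w)
    rw [min_eq_left hw1]
    linarith [Real.log_two_gt_d9]

theorem Real.min_one_sqrt_sq {w : ℝ} (hw : 0 ≤ w) : min 1 √w ^ 2 = min 1 w := by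
  rcases le_total w 1 with hw1 | hw1
  · rw [min_eq_right (Real.sqrt_le_one.2 hw1), min_eq_right hw1, Real.sq_sqrt hw]
  · rw [min_eq_left (Real.one_le_sqrt.2 hw1), min_eq_left hw1, one_pow]

theorem Finset.sum_min_one_sqrt_le {ι : Type*} (s : Finset ι) (w : ι → ℝ)
    (hw : ∀ i ∈ s, 0 ≤ w i) :
    ∑ i ∈ s, min 1 √(w i) ≤ √(#s * ∑ i ∈ s, min 1 (w i)) := by
  refine Real.le_sqrt_of_sq_le ?_
  calc (∑ i ∈ s, min 1 √(w i)) ^ 2 ≤ #s * ∑ i ∈ s, min 1 √(w i) ^ 2 :=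
        sq_sum_le_card_mul_sum_sq
    _ = #s * ∑ i ∈ s, min 1 (w i) := by
      rw [sum_congr rfl fun i hi => Real.min_one_sqrt_sq (hw i hi)]

theorem Fin.filter_val_lt_add_one {n : ℕ} (t : Fin n) :
    univ.filter (fun τ : Fin n => τ.val < t + 1) =
      insert t (univ.filter fun τ : Fin n => τ.val < t) := by
  ext τ
  simp only [mem_filter, mem_univ, true_and, mem_insert, Fin.ext_iff]
  omega

noncomputable def designMatrix {ι : Type*} [DecidableEq ι] {n : ℕ} (lam : ℝ)
    (x : Fin n → ι → ℝ) (t : ℕ) : Matrix ι ι ℝ :=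
  lam • 1 + ∑ τ : Fin n with τ.val < t, vecMulVec (x τ) (x τ)

namespace designMatrix

variable {ι : Type*} [DecidableEq ι] {n : ℕ} (lam : ℝ) (x : Fin n → ι → ℝ)

theorem zero : designMatrix lam x 0 = lam • 1 := by
  simp [designMatrix]

theorem succ (t : Fin n) :
    designMatrix lam x (t + 1) = designMatrix lam x t + vecMulVec (x t) (x t) := by
  rw [designMatrix, designMatrix, Fin.filter_val_lt_add_one, sum_insert (by simp), add_left_comm,
    add_comm]

variable {lam} [Fintype ι]

theorem posDef (hlam : 0 < lam) (t : ℕ) : (designMatrix lam x t).PosDef :=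
  ((PosDef.one).smul hlam).add_posSemidef <|
    posSemidef_sum _ fun τ _ => by simpa using posSemidef_vecMulVec_self_star (x τ)

theorem dotProduct_mulVec (t : ℕ) (v : ι → ℝ) :
    v ⬝ᵥ (designMatrix lam x t *ᵥ v) =
      lam * (v ⬝ᵥ v) + ∑ τ : Fin n with τ.val < t, (x τ ⬝ᵥ v) ^ 2 := by
  simp only [designMatrix, add_mulVec, smul_mulVec, one_mulVec, sum_mulVec, dotProduct_add,
    dotProduct_smul, smul_eq_mul, dotProduct_sum, dotProduct_vecMulVec_self_mulVec]

theorem dotProduct_inv_mulVec_nonneg (hlam : 0 < lam) (t : ℕ) (v : ι → ℝ) :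
    0 ≤ v ⬝ᵥ ((designMatrix lam x t)⁻¹ *ᵥ v) := by
  simpa using (posDef x hlam t).inv.posSemidef.dotProduct_mulVec_nonneg v

theorem det_succ (hlam : 0 < lam) (t : Fin n) :
    (designMatrix lam x (t + 1)).det =
      (designMatrix lam x t).det * (1 + x t ⬝ᵥ ((designMatrix lam x t)⁻¹ *ᵥ x t)) := by
  rw [succ, det_add_vecMulVec (posDef x hlam t).det_pos.ne'.isUnit]

theorem det_eq_prod (hlam : 0 < lam) {t : ℕ} (ht : t ≤ n) :
    (designMatrix lam x t).det = lam ^ Fintype.card ι *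
      ∏ τ : Fin n with τ.val < t, (1 + x τ ⬝ᵥ ((designMatrix lam x τ)⁻¹ *ᵥ x τ)) := by
  induction t with
  | zero => simp [zero]
  | succ t ih =>
    let τ : Fin n := ⟨t, ht⟩
    rw [show t + 1 = (τ : ℕ) + 1 from rfl, det_succ x hlam, ih (Nat.le_of_succ_le ht),
      Fin.filter_val_lt_add_one, prod_insert (by simp)]
    ring

theorem det_le (hlam : 0 < lam) (hx : ∀ τ, x τ ⬝ᵥ x τ ≤ 1) (t : ℕ) :
    (designMatrix lam x t).det ≤ (lam + n) ^ Fintype.card ι := by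
  refine (posDef x hlam t).posSemidef.det_le_pow fun v => ?_
  have hv : 0 ≤ v ⬝ᵥ v := by simpa using dotProduct_star_self_nonneg v
  rw [dotProduct_mulVec, add_mul]
  gcongr
  calc ∑ τ : Fin n with τ.val < t, (x τ ⬝ᵥ v) ^ 2
      ≤ ∑ τ : Fin n with τ.val < t, v ⬝ᵥ v :=
        sum_le_sum fun τ _ => (dotProduct_sq_le _ _).trans (mul_le_of_le_one_left hv (hx τ))
    _ ≤ n * (v ⬝ᵥ v) := by
        rw [sum_const, nsmul_eq_mul]
        gcongr
        simpa using card_filter_le (univ : Finset (Fin n)) _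

theorem sum_min_one_le_two_mul_log (hlam : 0 < lam) (hx : ∀ τ, x τ ⬝ᵥ x τ ≤ 1) :
    ∑ t : Fin n, min 1 (x t ⬝ᵥ ((designMatrix lam x t)⁻¹ *ᵥ x t)) ≤
      2 * Fintype.card ι * Real.log (1 + n / lam) := by
  set w : Fin n → ℝ := fun t => x t ⬝ᵥ ((designMatrix lam x t)⁻¹ *ᵥ x t)
  have hw : ∀ t, 0 ≤ w t := fun t => dotProduct_inv_mulVec_nonneg x hlam t (x t)
  have hprod : ∏ t, (1 + w t) ≤ (1 + n / lam) ^ Fintype.card ι := by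
    have hdet := det_le x hlam hx n
    rw [det_eq_prod x hlam le_rfl, filter_true_of_mem fun τ _ => τ.isLt] at hdet
    rw [← le_div_iff₀' (by positivity), ← div_pow, add_div, div_self hlam.ne'] at hdet
    exact hdet
  calc ∑ t, min 1 (w t) ≤ ∑ t, 2 * Real.log (1 + w t) :=
        sum_le_sum fun t _ => Real.min_one_le_two_mul_log_one_add (hw t)
    _ = 2 * Real.log (∏ t, (1 + w t)) := by
        rw [Real.log_prod fun t _ => by linarith [hw t], mul_sum]
    _ ≤ 2 * Real.log ((1 + n / lam) ^ Fintype.card ι) := by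
        gcongr
        exact prod_pos fun t _ => by linarith [hw t]
    _ = 2 * Fintype.card ι * Real.log (1 + n / lam) := by
        rw [Real.log_pow]
        ring

end designMatrix

theorem stmt17_general (d M n : ℕ) (hM : 0 < M) (hn : 0 < n)
    (x : Fin n → Fin d → ℝ) (hx : ∀ t, Real.sqrt (x t ⬝ᵥ x t) ≤ 1)
    (A : ℕ → Matrix (Fin d) (Fin d) ℝ)
    (hA : ∀ t : ℕ, A t = (1 / (M : ℝ)) • (1 : Matrix (Fin d) (Fin d) ℝ)
            + ∑ τ ∈ Finset.filter (fun τ : Fin n => (τ : ℕ) < t) Finset.univ,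
                vecMulVec (x τ) (x τ))
    (c : ℝ)
    (hclt : ∀ t : Fin n, c < min 1 (Real.sqrt (x t ⬝ᵥ ((A t)⁻¹ *ᵥ x t)))) :
    c * n ≤ Real.sqrt (2 * d * n * Real.log (2 * M * n)) := by
  obtain rfl : A = designMatrix (1 / (M : ℝ)) x := funext hA
  have hlam : (0 : ℝ) < 1 / M := by positivity
  have hxx : ∀ t, x t ⬝ᵥ x t ≤ 1 := fun t => by
    simpa using (Real.sqrt_le_left zero_le_one).1 (hx t)
  have hpot := designMatrix.sum_min_one_le_two_mul_log x hlam hxx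
  have hMn : 1 + n / (1 / (M : ℝ)) ≤ 2 * M * n := by
    have : (1 : ℝ) ≤ M * n :=
      one_le_mul_of_one_le_of_one_le (by exact_mod_cast hM) (by exact_mod_cast hn)
    rw [div_div_eq_mul_div, div_one]
    linarith [mul_comm (n : ℝ) M]
  set w : Fin n → ℝ := fun t => x t ⬝ᵥ ((designMatrix (1 / (M : ℝ)) x t)⁻¹ *ᵥ x t)
  calc c * n = ∑ _t : Fin n, c := by simp [mul_comm]
    _ ≤ ∑ t, min 1 √(w t) := sum_le_sum fun t _ => (hclt t).le
    _ ≤ √(n * ∑ t, min 1 (w t)) := by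
        simpa using sum_min_one_sqrt_le univ w fun t _ =>
          designMatrix.dotProduct_inv_mulVec_nonneg x hlam t (x t)
    _ ≤ √(n * (2 * d * Real.log (2 * M * n))) := by
        gcongr
        refine hpot.trans ?_
        rw [Fintype.card_fin]
        gcongr
    _ = √(2 * d * n * Real.log (2 * M * n)) := by ring_nf

/-- With `A_t = (1/M) I_d + Σ_{τ<t} x_τ x_τ'` (0-based indexing of the
`n` vectors, each of Euclidean norm at most 1), if `c > 0` satisfies
`c < min{1, √(x_t' A_t⁻¹ x_t)}` for all `t`, then `c n ≤ √(2 d n log(2 M n))`. -/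
theorem stmt17 (d M n : ℕ) (hd : 0 < d) (hM : 0 < M) (hn : 0 < n)
    (x : Fin n → Fin d → ℝ) (hx : ∀ t, Real.sqrt (x t ⬝ᵥ x t) ≤ 1)
    (A : ℕ → Matrix (Fin d) (Fin d) ℝ)
    (hA : ∀ t : ℕ, A t = (1 / (M : ℝ)) • (1 : Matrix (Fin d) (Fin d) ℝ)
            + ∑ τ ∈ Finset.filter (fun τ : Fin n => (τ : ℕ) < t) Finset.univ,
                vecMulVec (x τ) (x τ))
    (c : ℝ) (hc : 0 < c)
    (hclt : ∀ t : Fin n, c < min 1 (Real.sqrt (x t ⬝ᵥ ((A t)⁻¹ *ᵥ x t)))) :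
    c * n ≤ Real.sqrt (2 * d * n * Real.log (2 * M * n)) :=
  stmt17_general d M n hM hn x hx A hA c hclt
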